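/- arXiv:0907.2811 — 5 statements merged into one kernel-verified Lean document; each statement's English description precedes it below -/
import Mathlib

section
/- For any normal tropical 3×3 real matrix A (i.e., all diagonal entries equal 0 and all entries ≤ 0), the tropical matrix powers satisfy A^⊙2 = A^⊙3, where tropical matrix multiplication uses (max, +). -/
/-!
`A^⊙3 ≥ A^⊙2` because the diagonal of `A` is zero. Conversely, a walk `i → k → l → j` of three
steps on three vertices repeats a vertex, so it contains a loop, of weight `0`, or a closed
subwalk, of weight `≤ 0`; replacing it by loops gives a two-step walk of at least the same weight.
-/

/-- Tropical (max,+) product of 3×3 real matrices. -/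
def tmul (A B : Fin 3 → Fin 3 → ℝ) : Fin 3 → Fin 3 → ℝ :=
  fun i j => max (A i 0 + B 0 j) (max (A i 1 + B 1 j) (A i 2 + B 2 j))

/-- Tropical (max,+) matrix–vector product. -/
def tvec (A : Fin 3 → Fin 3 → ℝ) (x : Fin 3 → ℝ) : Fin 3 → ℝ :=
  fun i => max (A i 0 + x 0) (max (A i 1 + x 1) (A i 2 + x 2))

/-- A 3×3 real matrix is normal if its diagonal is 0 and all entries are ≤ 0. -/
def IsNormal (A : Fin 3 → Fin 3 → ℝ) : Prop :=
  (∀ i, A i i = 0) ∧ ∀ i j, A i j ≤ 0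

/-- The index of `Fin 3` distinct from both `i` and `j` (when `i ≠ j`). -/
def otherIdx (i j : Fin 3) : Fin 3 := ⟨(6 - i.val - j.val) % 3, Nat.mod_lt _ (by norm_num)⟩

/-- The matrix Ă: zero diagonal, and β_{ij} = a_{ik} + a_{kj} for i ≠ j, k the third index. -/
def breve (A : Fin 3 → Fin 3 → ℝ) : Fin 3 → Fin 3 → ℝ :=
  fun i j => if i = j then 0 else A i (otherIdx i j) + A (otherIdx i j) j

theorem tmul_le_iff {M N : Fin 3 → Fin 3 → ℝ} {i j : Fin 3} {c : ℝ} :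
    tmul M N i j ≤ c ↔ ∀ m, M i m + N m j ≤ c := by
  simp [tmul, Fin.forall_fin_succ]

theorem le_tmul (M N : Fin 3 → Fin 3 → ℝ) (i m j : Fin 3) : M i m + N m j ≤ tmul M N i j :=
  tmul_le_iff.1 le_rfl m

theorem le_tmul_of_diag_eq_zero (M : Fin 3 → Fin 3 → ℝ) {A : Fin 3 → Fin 3 → ℝ}
    (hA : ∀ i, A i i = 0) : M ≤ tmul M A := fun i j => by
  simpa [hA j] using le_tmul M A i j j

theorem Fin.three_step_walk_repeats (i k l j : Fin 3) :
    i = k ∨ k = l ∨ l = j ∨ i = l ∨ k = j ∨ i = j := by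
  revert i k l j
  decide

theorem IsNormal.add_add_le_tmul {A : Fin 3 → Fin 3 → ℝ} (hA : IsNormal A) (i k l j : Fin 3) :
    A i k + A k l + A l j ≤ tmul A A i j := by
  obtain ⟨hdiag, hnonpos⟩ := hA
  rcases Fin.three_step_walk_repeats i k l j with rfl | rfl | rfl | rfl | rfl | rfl
  · linarith [hdiag i, le_tmul A A i l j]
  · linarith [hdiag k, le_tmul A A i k j]
  · linarith [hdiag l, le_tmul A A i k l]
  · linarith [hdiag i, hnonpos i k, hnonpos k i, le_tmul A A i i j]
  · linarith [hdiag k, hnonpos k l, hnonpos l k, le_tmul A A i k k]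
  · linarith [hdiag i, hnonpos i k, hnonpos k l, hnonpos l i, le_tmul A A i i i]

theorem IsNormal.tmul_tmul_le {A : Fin 3 → Fin 3 → ℝ} (hA : IsNormal A) :
    tmul (tmul A A) A ≤ tmul A A := fun i j => by
  refine tmul_le_iff.2 fun l => le_sub_iff_add_le.1 (tmul_le_iff.2 fun k => ?_)
  exact le_sub_iff_add_le.2 (hA.add_add_le_tmul i k l j)

theorem stmt0 (A : Fin 3 → Fin 3 → ℝ) (hA : IsNormal A) :
    tmul A A = tmul (tmul A A) A :=
  le_antisymm (le_tmul_of_diag_eq_zero _ hA.1) hA.tmul_tmul_le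
end

section
/- If A is a 3×3 normal tropical real matrix, then A^⊙2 equals the entrywise maximum of A and the matrix Ă, where Ă has zero diagonal and off-diagonal entries β_{ij} = a_{ik} + a_{kj} with {i,j,k} = {1,2,3}. -/
theorem eq_or_eq_or_eq_otherIdx {i j : Fin 3} (hij : i ≠ j) (m : Fin 3) :
    m = i ∨ m = j ∨ m = otherIdx i j := by
  revert i j m
  decide

section TropicalProduct

variable {A B : Fin 3 → Fin 3 → ℝ} {i j : Fin 3}

theorem tmul_apply_le_iff {c : ℝ} : tmul A B i j ≤ c ↔ ∀ k, A i k + B k j ≤ c := by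
  simp [tmul, Fin.forall_fin_succ]

theorem le_tmul_apply (k : Fin 3) : A i k + B k j ≤ tmul A B i j :=
  tmul_apply_le_iff.1 le_rfl k

theorem IsNormal.tmul_self_apply_self (hA : IsNormal A) (i : Fin 3) : tmul A A i i = 0 := by
  obtain ⟨hdiag, hnonpos⟩ := hA
  refine le_antisymm (tmul_apply_le_iff.2 fun k => add_nonpos (hnonpos i k) (hnonpos k i)) ?_
  simpa [hdiag] using le_tmul_apply (A := A) (B := A) (i := i) (j := i) i

theorem IsNormal.tmul_self_apply_of_ne (hA : IsNormal A) (hij : i ≠ j) :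
    tmul A A i j = max (A i j) (A i (otherIdx i j) + A (otherIdx i j) j) := by
  obtain ⟨hdiag, -⟩ := hA
  have hterm_i : A i i + A i j = A i j := by simp [hdiag]
  have hterm_j : A i j + A j j = A i j := by simp [hdiag]
  refine le_antisymm (tmul_apply_le_iff.2 fun m => ?_) ?_
  · rcases eq_or_eq_or_eq_otherIdx hij m with rfl | rfl | rfl
    · exact hterm_i.le.trans (le_max_left _ _)
    · exact hterm_j.le.trans (le_max_left _ _)
    · exact le_max_right _ _
  · exact max_le (hterm_i ▸ le_tmul_apply i) (le_tmul_apply _)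

end TropicalProduct

theorem stmt2 (A : Fin 3 → Fin 3 → ℝ) (hA : IsNormal A) :
    tmul A A = fun i j => max (A i j) (breve A i j) := by
  funext i j
  by_cases hij : i = j
  · subst hij
    simp [breve, hA.1 i, hA.tmul_self_apply_self i]
  · simp [breve, hij, hA.tmul_self_apply_of_ne hij]
end

section
/- A 3×3 normal tropical real matrix A satisfies A = A^⊙2 if and only if the six inequalities a_{23} + a_{31} ≤ a_{21}, a_{32} + a_{21} ≤ a_{31}, a_{13} + a_{32} ≤ a_{12}, a_{31} + a_{12} ≤ a_{32}, a_{12} + a_{23} ≤ a_{13}, a_{21} + a_{13} ≤ a_{23} all hold. -/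
/-
For a normal matrix the terms `a_ii + a_ij` and `a_ij + a_jj` of `(A ⊙ A)_ij` both equal `a_ij`, so
off the diagonal `(A ⊙ A)_ij = max (a_ij, a_ik + a_kj)` with `k` the third index, while on the
diagonal it is `0 = a_ii` because all entries are nonpositive. Hence `A ⊙ A = max (A, Ă)` entrywise,
and `A` is idempotent iff `Ă ≤ A`, which off the diagonal are exactly the six inequalities.
-/
theorem tmul_self_eq_sup_breve {A : Fin 3 → Fin 3 → ℝ} (hA : IsNormal A) :
    tmul A A = A ⊔ breve A := by
  obtain ⟨hdiag, hle⟩ := hA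
  funext i j
  fin_cases i <;> fin_cases j <;>
    simp only [tmul, breve, otherIdx, hdiag, Pi.sup_apply] <;> grind

theorem breve_le_iff {A : Fin 3 → Fin 3 → ℝ} (hdiag : ∀ i, A i i = 0) :
    breve A ≤ A ↔
      (A 1 2 + A 2 0 ≤ A 1 0 ∧ A 2 1 + A 1 0 ≤ A 2 0 ∧
       A 0 2 + A 2 1 ≤ A 0 1 ∧ A 2 0 + A 0 1 ≤ A 2 1 ∧
       A 0 1 + A 1 2 ≤ A 0 2 ∧ A 1 0 + A 0 2 ≤ A 1 2) := by
  constructor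
  · intro h
    exact ⟨h 1 0, h 2 0, h 0 1, h 2 1, h 0 2, h 1 2⟩
  · rintro ⟨h10, h20, h01, h21, h02, h12⟩ i j
    fin_cases i <;> fin_cases j <;> simp [breve, otherIdx, hdiag, h10, h20, h01, h21, h02, h12]

theorem stmt8 (A : Fin 3 → Fin 3 → ℝ) (hA : IsNormal A) :
    A = tmul A A ↔
      (A 1 2 + A 2 0 ≤ A 1 0 ∧ A 2 1 + A 1 0 ≤ A 2 0 ∧
       A 0 2 + A 2 1 ≤ A 0 1 ∧ A 2 0 + A 0 1 ≤ A 2 1 ∧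
       A 0 1 + A 1 2 ≤ A 0 2 ∧ A 1 0 + A 0 2 ≤ A 1 2) := by
  rw [tmul_self_eq_sup_breve hA, left_eq_sup]
  exact breve_le_iff hA.1
end

section
/- If A is a 3×3 normal tropical real matrix, then any tropical linear combination of the columns of A^⊙2 with real coefficients is a fixed point of x ↦ A ⊙ x: for all λ₁, λ₂, λ₃ ∈ ℝ, if x_i = max_j (λ_j + (A^⊙2)_{ij}), then A ⊙ x = x. -/
section Tropical

variable (A B : Fin 3 → Fin 3 → ℝ)

theorem tmul_apply_eq_tvec (i j : Fin 3) : tmul A B i j = tvec A (fun k => B k j) i := rfl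

theorem le_tvec (x : Fin 3 → ℝ) (i j : Fin 3) : A i j + x j ≤ tvec A x i := by
  fin_cases j <;> simp [tvec]

theorem tvec_le_iff {x : Fin 3 → ℝ} {i : Fin 3} {c : ℝ} :
    tvec A x i ≤ c ↔ ∀ j, A i j + x j ≤ c := by
  simp [tvec, Fin.forall_fin_succ]

/-- `A ⊙ x ≤ x`, written entrywise. -/
def IsSubFixed (x : Fin 3 → ℝ) : Prop := ∀ i j, A i j + x j ≤ x i

variable {A}

theorem IsSubFixed.const_add {x : Fin 3 → ℝ} (hx : IsSubFixed A x) (c : ℝ) :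
    IsSubFixed A (fun i => c + x i) := fun i j => by
  linarith [hx i j]

theorem IsSubFixed.max {x y : Fin 3 → ℝ} (hx : IsSubFixed A x) (hy : IsSubFixed A y) :
    IsSubFixed A (fun i => max (x i) (y i)) := fun i j => by
  rw [← max_add_add_left]
  exact max_le_max (hx i j) (hy i j)

theorem tvec_eq_self_of_isSubFixed (hdiag : ∀ i, 0 ≤ A i i) {x : Fin 3 → ℝ}
    (hx : IsSubFixed A x) : tvec A x = x := by
  funext i
  refine le_antisymm ((tvec_le_iff A).2 (hx i)) ?_
  linarith [hdiag i, le_tvec A x i i]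

theorem add_add_le_tmul_self (hA : IsNormal A) (i k l j : Fin 3) :
    A i k + (A k l + A l j) ≤ tmul A A i j := by
  have hrepeat : k = l ∨ i = k ∨ l = j ∨ i = j ∨ i = l ∨ k = j := by
    revert i k l j; decide
  obtain ⟨hdiag, hle⟩ := hA
  have hpath (m : Fin 3) : A i m + A m j ≤ tmul A A i j := le_tvec A (fun m => A m j) i m
  rcases hrepeat with rfl | rfl | rfl | rfl | rfl | rfl
  · linarith [hdiag k, hpath k]
  · linarith [hdiag i, hpath l]
  · linarith [hdiag l, hpath k]
  · linarith [hdiag i, hpath i, hle i k, hle k l, hle l i]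
  · linarith [hdiag i, hpath i, hle i k, hle k i]
  · linarith [hdiag k, hpath k, hle k l, hle l k]

theorem isSubFixed_tmul_self_col (hA : IsNormal A) (k : Fin 3) :
    IsSubFixed A (fun i => tmul A A i k) := fun i j => by
  have : tmul A A j k ≤ tmul A A i k - A i j := by
    rw [tmul_apply_eq_tvec, tvec_le_iff]
    intro m
    linarith [add_add_le_tmul_self hA i j m k]
  linarith

end Tropical

theorem stmt12 (A : Fin 3 → Fin 3 → ℝ) (hA : IsNormal A)
    (l1 l2 l3 : ℝ) :
    tvec A (fun i => max (l1 + tmul A A i 0) (max (l2 + tmul A A i 1) (l3 + tmul A A i 2))) =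
      fun i => max (l1 + tmul A A i 0) (max (l2 + tmul A A i 1) (l3 + tmul A A i 2)) := by
  have hcol := isSubFixed_tmul_self_col hA
  refine tvec_eq_self_of_isSubFixed (fun i => (hA.1 i).ge) ?_
  exact ((hcol 0).const_add l1).max (((hcol 1).const_add l2).max ((hcol 2).const_add l3))
end

section
/- If A = D(d, d₁, d₂, d₃) with d ≥ 0 and d_j ≥ −d for all j, and additionally d₁ < 0, then A ≠ A^⊙2; specifically (A^⊙2)_{32} = −2d − d₁ − d₂ > A_{32} = −2d − d₂. -/
/-- The matrix D(d,d₁,d₂,d₃). -/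
def Dmat (d d1 d2 d3 : ℝ) : Fin 3 → Fin 3 → ℝ :=
  ![![0, -d - d2, -2*d - d3], ![-2*d - d1, 0, -d - d3], ![-d - d1, -2*d - d2, 0]]

theorem Dmat_two_one (d d1 d2 d3 : ℝ) : Dmat d d1 d2 d3 2 1 = -2*d - d2 := rfl

/-- Of the three paths 3 → k → 2 (1-based indices), the one through 1 has weight `-2d - d2 - d1`;
the other two pass through a zero diagonal entry and have weight `-2d - d2`. -/
theorem tmul_Dmat_self_two_one (d d1 d2 d3 : ℝ) :
    tmul (Dmat d d1 d2 d3) (Dmat d d1 d2 d3) 2 1 = -2*d - d2 + max (-d1) 0 := by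
  simp only [tmul, Dmat, Matrix.cons_val, Matrix.cons_val_zero, Matrix.cons_val_one]
  rw [add_zero, zero_add, max_self, ← max_add_add_left]
  congr 1 <;> ring

theorem stmt16_general (d d1 d2 d3 : ℝ) (hneg : d1 < 0) :
    Dmat d d1 d2 d3 ≠ tmul (Dmat d d1 d2 d3) (Dmat d d1 d2 d3) ∧
    tmul (Dmat d d1 d2 d3) (Dmat d d1 d2 d3) 2 1 = -2*d - d1 - d2 ∧
    Dmat d d1 d2 d3 2 1 < tmul (Dmat d d1 d2 d3) (Dmat d d1 d2 d3) 2 1 := by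
  have hsq : tmul (Dmat d d1 d2 d3) (Dmat d d1 d2 d3) 2 1 = -2*d - d1 - d2 := by
    rw [tmul_Dmat_self_two_one, max_eq_left (by linarith)]
    ring
  have hlt : Dmat d d1 d2 d3 2 1 < tmul (Dmat d d1 d2 d3) (Dmat d d1 d2 d3) 2 1 := by
    rw [hsq, Dmat_two_one]
    linarith
  exact ⟨fun h => hlt.ne (congrFun (congrFun h 2) 1), hsq, hlt⟩

theorem stmt16 (d d1 d2 d3 : ℝ) (hd : 0 ≤ d)
    (h1 : -d ≤ d1) (h2 : -d ≤ d2) (h3 : -d ≤ d3) (hneg : d1 < 0) :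
    Dmat d d1 d2 d3 ≠ tmul (Dmat d d1 d2 d3) (Dmat d d1 d2 d3) ∧
    tmul (Dmat d d1 d2 d3) (Dmat d d1 d2 d3) 2 1 = -2*d - d1 - d2 ∧
    Dmat d d1 d2 d3 2 1 < tmul (Dmat d d1 d2 d3) (Dmat d d1 d2 d3) 2 1 :=
  stmt16_general d d1 d2 d3 hneg
end
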